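/- Let H be a complex inner product space of dimension at least 2 (or more generally containing two linearly independent unit vectors). There is no linear map L : H → H ⊗ H such that L(ψ) = ψ ⊗ ψ for all ψ ∈ H. -/
import Mathlib


open scoped TensorProduct

/-- **No-cloning, vector version.** If `H` is a complex inner
product space of dimension at least `2`, there is no linear map
`L : H →ₗ[ℂ] H ⊗[ℂ] H` with `L ψ = ψ ⊗ ψ` for all `ψ ∈ H`. -/
theorem no_linear_cloning
    {H : Type*} [NormedAddCommGroup H] [InnerProductSpace ℂ H]
    (hdim : 2 ≤ Module.rank ℂ H) :
    ¬ ∃ L : H →ₗ[ℂ] H ⊗[ℂ] H, ∀ ψ : H, L ψ = ψ ⊗ₜ[ℂ] ψ := by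
  rintro ⟨L, hL⟩
  -- H is nontrivial since rank ≥ 2 > 0
  have hpos : 0 < Module.rank ℂ H := lt_of_lt_of_le (by norm_num) hdim
  obtain ⟨ψ, hψ⟩ : ∃ ψ : H, ψ ≠ 0 := by
    by_contra h
    push_neg at h
    have : Subsingleton H := ⟨fun a b => by rw [h a, h b]⟩
    rw [rank_subsingleton'] at hpos
    exact lt_irrefl 0 hpos
  -- L (2 • ψ) = 2 • L ψ, but also = 4 • (ψ ⊗ ψ)
  have h1 : L ((2 : ℂ) • ψ) = (2 : ℂ) • (ψ ⊗ₜ[ℂ] ψ) := by rw [map_smul, hL]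
  have h2 : L ((2 : ℂ) • ψ) = (4 : ℂ) • (ψ ⊗ₜ[ℂ] ψ) := by
    rw [hL, TensorProduct.smul_tmul_smul]
    norm_num
  have hψψ : (ψ ⊗ₜ[ℂ] ψ : H ⊗[ℂ] H) = 0 := by
    have := h1.symm.trans h2
    have h4 : ((4 : ℂ) - 2) • (ψ ⊗ₜ[ℂ] ψ) = 0 := by
      rw [sub_smul, ← this, sub_self]
    norm_num at h4
    exact h4
  -- Apply inner product functional twice to get ⟪ψ,ψ⟫² = 0
  let f : H →ₗ[ℂ] ℂ := innerSL ℂ ψ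
  have : (TensorProduct.lid ℂ ℂ) ((TensorProduct.map f f) (ψ ⊗ₜ[ℂ] ψ)) = 0 := by
    rw [hψψ, map_zero, map_zero]
  simp only [TensorProduct.map_tmul, TensorProduct.lid_tmul, smul_eq_mul] at this
  have hinner : (@inner ℂ H _ ψ ψ) ≠ 0 := by
    exact inner_self_ne_zero.mpr hψ
  exact hinner (by
    have := mul_eq_zero.mp this
    rcases this with h | h <;> simpa [f] using h)
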